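/- Let q be an odd prime power with q ≡ 3 (mod 4), let g be a primitive element of GF(q), and let χ be the extended quadratic character. Define length-(q-1)/2 binary sequences a, b by a_0 = 1, a_k = χ(g^{2k} - 1) for 0 < k < (q-1)/2, and b_k = χ(g^{2k+1} - 1) for 0 ≤ k < (q-1)/2. Then (a,b) is a binary Legendre pair: R_a(u) + R_b(u) = -2 for all u ≢ 0 mod (q-1)/2. -/

import Mathlib

/-!
Put `c = g^(2u)`, a nonzero square different from `1`. Away from the two terms touched by
`a_0 = 1`, the products `a_k a_(k+u)` and `b_k b_(k+u)` are `χ(x - 1) χ(cx - 1)` with `x`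
running over the even, resp. odd, powers of `g`, i.e. jointly over `GF(q)ˣ`. The two corrections are
`χ(c - 1) + χ(c⁻¹ - 1) = (1 + χ(-1)) χ(c - 1) = 0` since `q ≡ 3 (mod 4)`. Finally
`∑ₓ χ(x - 1) χ(cx - 1) = ∑ₓ χ(x - 1) χ(x - c⁻¹) = -1` is a Jacobi sum, and dropping `x = 0`
(which contributes `χ(-1)² = 1`) leaves `-2`.
-/

open Finset

theorem ZMod.sum_val {M : Type*} [AddCommMonoid M] (N : ℕ) [NeZero N] (G : ℕ → M) :
    ∑ k : ZMod N, G k.val = ∑ i ∈ range N, G i := by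
  obtain ⟨n, rfl⟩ := Nat.exists_eq_succ_of_ne_zero (NeZero.ne N)
  exact Fin.sum_univ_eq_sum_range G _

theorem ZMod.pow_val_add {M : Type*} [Monoid M] {N : ℕ} [NeZero N] {x : M} (hx : x ^ N = 1)
    (k u : ZMod N) : x ^ (k + u).val = x ^ k.val * x ^ u.val := by
  rw [ZMod.val_add, ← pow_eq_pow_mod _ hx, pow_add]

theorem ZMod.pow_val_neg {M : Type*} [DivisionMonoid M] {N : ℕ} [NeZero N] {x : M}
    (hx : x ^ N = 1) (u : ZMod N) : x ^ (-u).val = (x ^ u.val)⁻¹ :=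
  eq_inv_of_mul_eq_one_left <| by
    rw [← ZMod.pow_val_add hx, neg_add_cancel, ZMod.val_zero, pow_zero]

theorem Finset.sum_range_two_mul {M : Type*} [AddCommMonoid M] (G : ℕ → M) (n : ℕ) :
    ∑ j ∈ range (2 * n), G j = ∑ i ∈ range n, (G (2 * i) + G (2 * i + 1)) := by
  induction n with
  | zero => simp
  | succ n ih =>
    rw [mul_add, mul_one, sum_range_succ, sum_range_succ, sum_range_succ, ih, add_assoc]

theorem FiniteField.sum_range_orderOf_pow {F M : Type*} [Field F] [Fintype F] [DecidableEq F]
    [AddCommMonoid M] {g : F} (hg : orderOf g = Fintype.card F - 1) (f : F → M) :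
    ∑ i ∈ range (orderOf g), f (g ^ i) = ∑ x ∈ univ.erase 0, f x := by
  have hinj : Set.InjOn (g ^ ·) (range (orderOf g)) := fun i hi j hj =>
    pow_injOn_Iio_orderOf (by simpa using hi) (by simpa using hj)
  rw [← sum_image hinj]
  congr 1
  have hg0 : g ≠ 0 :=
    (orderOf_ne_zero_iff.mp (by have := Fintype.one_lt_card (α := F); omega)).isUnit.ne_zero
  refine eq_of_subset_of_card_le (fun x hx => ?_) ?_
  · obtain ⟨i, -, rfl⟩ := mem_image.mp hx
    exact mem_erase.mpr ⟨pow_ne_zero i hg0, mem_univ _⟩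
  · rw [card_image_of_injOn hinj, card_range, card_erase_of_mem (mem_univ _), card_univ, hg]

theorem FiniteField.sum_pow_shift_even_add_odd {F M : Type*} [Field F] [Fintype F]
    [DecidableEq F] [AddCommMonoid M] {N : ℕ} [NeZero N] (hcard : Fintype.card F = 2 * N + 1)
    {g : F} (hg : orderOf g = Fintype.card F - 1) (φ : F → F → M) (u : ZMod N) :
    ∑ k : ZMod N, φ (g ^ (2 * k.val)) (g ^ (2 * (k + u).val))
      + ∑ k : ZMod N, φ (g ^ (2 * k.val + 1)) (g ^ (2 * (k + u).val + 1))
      = ∑ x ∈ univ.erase 0, φ x (g ^ (2 * u.val) * x) := by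
  set ψ : F → M := fun x => φ x (g ^ (2 * u.val) * x)
  have hord : orderOf g = 2 * N := by omega
  have hg2 : (g ^ 2) ^ N = 1 := by rw [← pow_mul, ← hord, pow_orderOf_eq_one]
  have hshift : ∀ k : ZMod N, g ^ (2 * (k + u).val) = g ^ (2 * u.val) * g ^ (2 * k.val) :=
    fun k => by simp only [pow_mul, ZMod.pow_val_add hg2, mul_comm]
  calc _ = ∑ k : ZMod N, (ψ (g ^ (2 * k.val)) + ψ (g ^ (2 * k.val + 1))) := by
        rw [← sum_add_distrib]
        refine sum_congr rfl fun k _ => ?_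
        rw [pow_succ, pow_succ, hshift, mul_assoc]
    _ = ∑ j ∈ range (orderOf g), ψ (g ^ j) := by
        rw [ZMod.sum_val N (fun i => ψ (g ^ (2 * i)) + ψ (g ^ (2 * i + 1))), hord,
          sum_range_two_mul]
    _ = _ := FiniteField.sum_range_orderOf_pow hg ψ

section QuadraticChar

variable {F : Type*} [Field F] [Fintype F] [DecidableEq F]

theorem quadraticChar_sum_mul_sub_sub (hF : ringChar F ≠ 2) {α β : F} (hαβ : α ≠ β) :
    ∑ x, quadraticChar F (x - α) * quadraticChar F (x - β) = -1 := by
  set χ := quadraticChar F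
  have hJ : ∑ t, χ t * χ (1 - t) = -χ (-1) := by
    simpa only [(quadraticChar_isQuadratic F).inv, jacobiSum] using
      jacobiSum_nontrivial_inv (quadraticChar_ne_one hF)
  have hd : α - β ≠ 0 := sub_ne_zero.mpr hαβ
  -- substitute `x = α - (α - β) t`, turning the sum into the Jacobi sum `J(χ, χ)`
  let e : F ≃ F := (Equiv.mulLeft₀ (α - β) hd).trans (Equiv.subLeft α)
  calc ∑ x, χ (x - α) * χ (x - β)
      = ∑ t, χ (-1) * χ (α - β) ^ 2 * (χ t * χ (1 - t)) := by
        refine (Fintype.sum_equiv e _ _ fun t => ?_).symm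
        simp only [e, Equiv.trans_apply, Equiv.mulLeft₀_apply, Equiv.subLeft_apply]
        rw [show α - (α - β) * t - α = -1 * (α - β) * t by ring,
          show α - (α - β) * t - β = (α - β) * (1 - t) by ring, map_mul, map_mul, map_mul]
        ring
    _ = -1 := by
        rw [← mul_sum, hJ, quadraticChar_sq_one hd]
        linear_combination -quadraticChar_sq_one (neg_ne_zero.mpr (one_ne_zero' F))

theorem quadraticChar_inv_sub_one {c : F} (hc : c ≠ 0) :
    quadraticChar F (c⁻¹ - 1)
      = quadraticChar F (-1) * quadraticChar F c * quadraticChar F (c - 1) := by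
  have hinv : quadraticChar F c⁻¹ = quadraticChar F c := by
    rw [← mul_one (quadraticChar F c⁻¹), ← quadraticChar_sq_one hc, sq, ← mul_assoc, ← map_mul,
      inv_mul_cancel₀ hc, map_one, one_mul]
  rw [show c⁻¹ - 1 = -1 * c⁻¹ * (c - 1) by field_simp; ring, map_mul, map_mul, hinv]

theorem quadraticChar_sum_ne_zero_mul_sub_one (hF : ringChar F ≠ 2) {c : F} (hc0 : c ≠ 0)
    (hc1 : c ≠ 1) (hc : quadraticChar F c = 1) :
    ∑ x ∈ univ.erase 0, quadraticChar F (x - 1) * quadraticChar F (c * x - 1) = -2 := by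
  have hshift : ∀ x : F, quadraticChar F (c * x - 1) = quadraticChar F (x - c⁻¹) := fun x => by
    rw [show c * x - 1 = c * (x - c⁻¹) by field_simp, map_mul, hc, one_mul]
  have hne : (1 : F) ≠ c⁻¹ := fun h => hc1 (by rw [← inv_inv c, ← h, inv_one])
  rw [sum_erase_eq_sub (mem_univ 0)]
  simp only [hshift, quadraticChar_sum_mul_sub_sub hF hne, mul_zero, zero_sub, ← sq]
  rw [quadraticChar_sq_one (neg_ne_zero.mpr one_ne_zero)]
  norm_num

end QuadraticChar

theorem sum_mul_shift_of_eq_add_single {G R : Type*} [AddGroup G] [Fintype G] [DecidableEq G]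
    [CommRing R] {s a : G → R} (ha0 : a 0 = s 0 + 1) (ha : ∀ k, k ≠ 0 → a k = s k) {u : G}
    (hu : u ≠ 0) :
    ∑ k, a k * a (k + u) = ∑ k, s k * s (k + u) + s u + s (-u) := by
  have ha' : ∀ k, a k = s k + if k = 0 then 1 else 0 := fun k => by
    by_cases hk : k = 0
    · rw [hk, ha0, if_pos rfl]
    · rw [ha k hk, if_neg hk, add_zero]
  simp only [ha', add_mul, mul_add, sum_add_distrib, mul_ite, ite_mul, mul_one, one_mul, mul_zero,
    zero_mul, add_eq_zero_iff_eq_neg, sum_ite_eq', mem_univ, if_true, zero_add, neg_eq_zero, hu,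
    if_false, add_zero]

open Finset in
/-- First construction (Theorem 1(i), Szekeres): for an odd prime power `q ≡ 3 (mod 4)`,
with `g` a primitive element of `GF(q)` and `χ` the extended quadratic character, the
length-`(q-1)/2` binary sequences `a` (with `a_0 = 1`, `a_k = χ(g^{2k}-1)` otherwise)
and `b` (with `b_k = χ(g^{2k+1}-1)`) form a binary Legendre pair. -/
theorem first_construction_q3mod4 (F : Type*) [Field F] [Fintype F] [DecidableEq F]
    (N : ℕ) [NeZero N] (hcard : Fintype.card F = 2 * N + 1)
    (hq4 : Fintype.card F % 4 = 3)
    (g : F) (hg : orderOf g = Fintype.card F - 1)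
    (χ : F → ℤ)
    (hχ : ∀ α : F, χ α = if α = 0 then 0 else if IsSquare α then 1 else -1)
    (a b : ZMod N → ℤ)
    (ha0 : a 0 = 1)
    (ha : ∀ k : ZMod N, k ≠ 0 → a k = χ (g ^ (2 * k.val) - 1))
    (hb : ∀ k : ZMod N, b k = χ (g ^ (2 * k.val + 1) - 1)) :
    ∀ u : ZMod N, u ≠ 0 →
      (∑ k : ZMod N, a k * a (k + u)) + ∑ k : ZMod N, b k * b (k + u) = -2 := by
  intro u hu
  obtain rfl : χ = quadraticChar F := funext fun α => by
    rw [hχ, quadraticChar_apply, quadraticCharFun]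
  have hF : ringChar F ≠ 2 := fun h => by have := FiniteField.even_card_of_char_two h; omega
  have hord : orderOf g = 2 * N := by omega
  have hg0 : g ≠ 0 := (orderOf_ne_zero_iff.mp (by omega)).isUnit.ne_zero
  set c := g ^ (2 * u.val)
  have hc0 : c ≠ 0 := pow_ne_zero _ hg0
  have hc1 : c ≠ 1 := pow_ne_one_of_lt_orderOf (by simpa using (ZMod.val_ne_zero u).mpr hu)
    (by rw [hord]; linarith [ZMod.val_lt u])
  have hcsq : quadraticChar F c = 1 := by
    rw [show c = (g ^ u.val) ^ 2 from pow_mul' g 2 u.val]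
    exact quadraticChar_sq_one' (pow_ne_zero _ hg0)
  have hneg_u : g ^ (2 * (-u).val) = c⁻¹ := by
    simp only [c, pow_mul]
    exact ZMod.pow_val_neg (by rw [← pow_mul, ← hord, pow_orderOf_eq_one]) u
  rw [sum_mul_shift_of_eq_add_single (s := fun k => quadraticChar F (g ^ (2 * k.val) - 1))
    (by simp [ha0]) ha hu]
  have hpair := FiniteField.sum_pow_shift_even_add_odd hcard hg
    (fun x y => quadraticChar F (x - 1) * quadraticChar F (y - 1)) u
  beta_reduce at hpair
  rw [quadraticChar_sum_ne_zero_mul_sub_one hF hc0 hc1 hcsq] at hpair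
  simp only [hb, hneg_u, quadraticChar_inv_sub_one hc0, quadraticChar_neg_one hF,
    ZMod.χ₄_nat_three_mod_four hq4, hcsq]
  linear_combination hpair
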